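/- arXiv:2002.11182 — 2 statements merged into one kernel-verified Lean document; each statement's English description precedes it below -/
import Mathlib

section
/- Suppose X ⊂ ℝ^d is a finite nonempty action set, each x ∈ X has an observation matrix A_x ∈ ℝ^{d×m} with ‖A_x‖₂ ≤ 1, V ∈ ℝ^{d×d} is symmetric positive definite with V ⪰ I_d, θ̂ ∈ ℝ^d, β > 0, and α > 0 is such that for every v ∈ ℝ^d and every x, y ∈ X there exists z ∈ X with ⟨x−y, v⟩² ≤ α·‖A_zᵀ v‖². Let x̂* ∈ X be a maximizer of ⟨x, θ̂⟩ over X. Then Δ(x̂*)² ≤ 2·α·β·max_{z∈X} I(z), where Δ(x) = max_{y∈X} (⟨y−x, θ̂⟩ + √β·‖y−x‖_{V^{-1}}) and I(z) = log det(I_m + A_zᵀ V^{-1} A_z). -/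
/-!
Let `y` attain `Δ(x̂*)` and `w = y - x̂*`. Greediness gives `⟨w, θ̂⟩ ≤ 0`, so
`Δ(x̂*)² ≤ β ‖w‖²_{V⁻¹}`. Alignment at `v = V⁻¹ w` yields `z` with
`‖w‖⁴_{V⁻¹} ≤ α ‖A_zᵀ V⁻¹ w‖²`, and Cauchy–Schwarz for the `V⁻¹`-inner product, column by
column, bounds `‖A_zᵀ V⁻¹ w‖²` by `tr M · ‖w‖²_{V⁻¹}` with `M = A_zᵀ V⁻¹ A_z`; thus
`‖w‖²_{V⁻¹} ≤ α tr M`. From `V ⪰ 1` and `A_zᵀ A_z ⪯ 1` we get `0 ⪯ M ⪯ 1`, so every eigenvalue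
`λ` of `M` lies in `[0, 1]`, where `λ ≤ 2 log (1 + λ)`; summing,
`tr M ≤ 2 log det (1 + M) = 2 I(z)`.
-/

open Matrix Finset
open scoped ComplexOrder

lemma Real.half_le_log_one_add {x : ℝ} (h0 : 0 ≤ x) (h2 : x ≤ 2) :
    x / 2 ≤ Real.log (1 + x) := by
  refine le_trans ?_ (Real.le_log_one_add_of_nonneg h0)
  rw [div_le_div_iff₀ (by norm_num) (by linarith)]
  nlinarith

namespace Matrix

variable {𝕜 n k : Type*} [RCLike 𝕜]

lemma PosDef.of_posSemidef_sub_one [DecidableEq n] {V : Matrix n n 𝕜} (hV : (V - 1).PosSemidef) :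
    V.PosDef := by
  simpa using PosDef.posSemidef_add hV PosDef.one

variable [Fintype n]

lemma IsHermitian.det_one_add [DecidableEq n] {M : Matrix n n 𝕜} (hM : M.IsHermitian) :
    det (1 + M) = ∏ i, (1 + (hM.eigenvalues i : 𝕜)) := by
  have : 1 + M = cfc (fun x : ℝ => 1 + x) M := by
    rw [cfc_const_add 1 _ M, cfc_id' ℝ M, map_one]
  rw [this, hM.cfc_eq]
  simp [IsHermitian.cfc, -Unitary.conjStarAlgAut_apply]

open scoped MatrixOrder in
lemma IsHermitian.eigenvalues_le_one [DecidableEq n] {M : Matrix n n 𝕜} (hM : M.IsHermitian)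
    (h : (1 - M).PosSemidef) (i : n) : hM.eigenvalues i ≤ 1 := by
  have hmem : 1 - hM.eigenvalues i ∈ spectrum ℝ (1 - M) := by
    rw [← map_one (algebraMap ℝ (Matrix n n 𝕜)), ← spectrum.singleton_sub_eq]
    exact Set.sub_mem_sub rfl (hM.eigenvalues_mem_spectrum_real i)
  linarith [spectrum_nonneg_of_nonneg h.nonneg hmem]

lemma PosSemidef.trace_le_two_mul_log_det_one_add [DecidableEq n] {M : Matrix n n ℝ}
    (hM : M.PosSemidef) (h1 : (1 - M).PosSemidef) : M.trace ≤ 2 * Real.log (det (1 + M)) := by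
  have hev0 := hM.eigenvalues_nonneg
  have hev1 := hM.isHermitian.eigenvalues_le_one h1
  simp only [hM.isHermitian.trace_eq_sum_eigenvalues, hM.isHermitian.det_one_add,
    RCLike.ofReal_real_eq_id, id]
  rw [Real.log_prod fun i _ => by linarith [hev0 i], mul_sum]
  refine sum_le_sum fun i _ => ?_
  linarith [Real.half_le_log_one_add (hev0 i) (by linarith [hev1 i])]

variable {P : Matrix n n ℝ}

lemma PosSemidef.dotProduct_mulVec_sq_le (hP : P.PosSemidef) (a b : n → ℝ) :
    (a ⬝ᵥ (P *ᵥ b)) ^ 2 ≤ (a ⬝ᵥ (P *ᵥ a)) * (b ⬝ᵥ (P *ᵥ b)) := by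
  have hsymm : b ⬝ᵥ (P *ᵥ a) = a ⬝ᵥ (P *ᵥ b) := by
    rw [dotProduct_mulVec, ← mulVec_transpose, ← conjTranspose_eq_transpose_of_trivial,
      hP.isHermitian.eq, dotProduct_comm]
  have hdisc := discrim_le_zero (a := b ⬝ᵥ (P *ᵥ b)) (b := 2 * (a ⬝ᵥ (P *ᵥ b)))
    (c := a ⬝ᵥ (P *ᵥ a)) fun t => by
      have := hP.dotProduct_mulVec_nonneg (a + t • b)
      simp only [star_trivial, mulVec_add, mulVec_smul, dotProduct_add, add_dotProduct,
        dotProduct_smul, smul_dotProduct, smul_eq_mul, hsymm] at this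
      linarith
  rw [discrim] at hdisc
  linarith

lemma transpose_mul_mul_apply_self (B : Matrix n k ℝ) (j : k) :
    (Bᵀ * P * B) j j = Bᵀ j ⬝ᵥ (P *ᵥ Bᵀ j) := by
  rw [Matrix.mul_assoc]
  simp [mul_apply, dotProduct, mulVec]

lemma dotProduct_transpose_mulVec_self_le_trace_mul [Fintype k] (hP : P.PosSemidef)
    (B : Matrix n k ℝ) (w : n → ℝ) :
    (Bᵀ *ᵥ (P *ᵥ w)) ⬝ᵥ (Bᵀ *ᵥ (P *ᵥ w)) ≤
      (Bᵀ * P * B).trace * (w ⬝ᵥ (P *ᵥ w)) := by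
  rw [trace, sum_mul, dotProduct]
  refine sum_le_sum fun j _ => ?_
  rw [diag_apply, transpose_mul_mul_apply_self, ← sq]
  exact hP.dotProduct_mulVec_sq_le (Bᵀ j) w

lemma PosSemidef.one_sub_inv [DecidableEq n] {V : Matrix n n 𝕜} (hV : (V - 1).PosSemidef) :
    (1 - V⁻¹).PosSemidef := by
  have hVdef : V.PosDef := .of_posSemidef_sub_one hV
  have hdet : IsUnit V.det := isUnit_iff_isUnit_det V |>.mp hVdef.isUnit
  -- with `D = V - 1`: `1 - V⁻¹ = V⁻¹ (V² - V) V⁻¹` and `V² - V = D + D²`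
  have key : 1 - V⁻¹ = (V⁻¹)ᴴ * ((V - 1) + (V - 1)ᴴ * (V - 1)) * V⁻¹ := by
    rw [conjTranspose_nonsing_inv, conjTranspose_sub, conjTranspose_one, hVdef.isHermitian.eq]
    calc 1 - V⁻¹ = (V⁻¹ * V) * (V * V⁻¹) - V⁻¹ * V * V⁻¹ := by
          rw [nonsing_inv_mul V hdet, mul_nonsing_inv V hdet, one_mul, one_mul]
      _ = _ := by noncomm_ring
  rw [key]
  exact (hV.add (posSemidef_conjTranspose_mul_self _)).conjTranspose_mul_mul_same _

end Matrix

lemma exists_sq_sup'_le_mul_dotProduct {n : Type*} [Fintype n] {X : Finset (n → ℝ)}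
    (hX : X.Nonempty) {P : Matrix n n ℝ} (hP : P.PosSemidef) (θ : n → ℝ) {β : ℝ} (hβ : 0 ≤ β)
    {xs : n → ℝ} (hxs : xs ∈ X) (hgreedy : ∀ y ∈ X, y ⬝ᵥ θ ≤ xs ⬝ᵥ θ) :
    ∃ y ∈ X, (X.sup' hX fun y =>
        (y - xs) ⬝ᵥ θ + Real.sqrt β * Real.sqrt ((y - xs) ⬝ᵥ (P *ᵥ (y - xs)))) ^ 2 ≤
      β * ((y - xs) ⬝ᵥ (P *ᵥ (y - xs))) := by
  set f : (n → ℝ) → ℝ := fun y =>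
    (y - xs) ⬝ᵥ θ + Real.sqrt β * Real.sqrt ((y - xs) ⬝ᵥ (P *ᵥ (y - xs)))
  obtain ⟨y, hy, hsup⟩ := exists_mem_eq_sup' hX f
  refine ⟨y, hy, ?_⟩
  set q := (y - xs) ⬝ᵥ (P *ᵥ (y - xs))
  have hnonneg : 0 ≤ X.sup' hX f := le_sup'_of_le f hxs (by simp [f])
  have hle : X.sup' hX f ≤ Real.sqrt β * Real.sqrt q := by
    rw [hsup]
    linarith [hgreedy y hy, sub_dotProduct y xs θ]
  calc (X.sup' hX f) ^ 2 ≤ (Real.sqrt β * Real.sqrt q) ^ 2 := pow_le_pow_left₀ hnonneg hle 2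
    _ = β * q := by
      rw [mul_pow, Real.sq_sqrt hβ, Real.sq_sqrt (by simpa using hP.dotProduct_mulVec_nonneg _)]

lemma dotProduct_inv_mulVec_le_two_mul_log_det {n k : Type*} [Fintype n] [Fintype k]
    [DecidableEq n] [DecidableEq k] {V : Matrix n n ℝ} (hV : (V - 1).PosSemidef)
    {B : Matrix n k ℝ} (hB : (1 - Bᵀ * B).PosSemidef) {α : ℝ} (hα : 0 < α) {w : n → ℝ}
    (halign : (w ⬝ᵥ (V⁻¹ *ᵥ w)) ^ 2 ≤
      α * ((Bᵀ *ᵥ (V⁻¹ *ᵥ w)) ⬝ᵥ (Bᵀ *ᵥ (V⁻¹ *ᵥ w)))) :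
    w ⬝ᵥ (V⁻¹ *ᵥ w) ≤ 2 * α * Real.log (det (1 + Bᵀ * V⁻¹ * B)) := by
  have hVinv : (V⁻¹).PosSemidef := (PosDef.of_posSemidef_sub_one hV).inv.posSemidef
  set q := w ⬝ᵥ (V⁻¹ *ᵥ w)
  set M := Bᵀ * V⁻¹ * B
  have hM : M.PosSemidef := by
    simpa only [conjTranspose_eq_transpose_of_trivial] using hVinv.conjTranspose_mul_mul_same B
  have h1M : (1 - M).PosSemidef := by
    have := hB.add ((PosSemidef.one_sub_inv hV).conjTranspose_mul_mul_same B)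
    convert this using 1
    simp only [M, conjTranspose_eq_transpose_of_trivial, Matrix.mul_sub, Matrix.sub_mul,
      Matrix.mul_one]
    abel
  have hq : q ≤ α * M.trace := by
    have hq0 : 0 ≤ q := by simpa using hVinv.dotProduct_mulVec_nonneg w
    rcases hq0.eq_or_lt with hq0 | hq0
    · exact hq0 ▸ mul_nonneg hα.le hM.trace_nonneg
    · refine le_of_mul_le_mul_right ?_ hq0
      calc q * q = q ^ 2 := (sq q).symm
        _ ≤ α * (M.trace * q) :=
          halign.trans <| mul_le_mul_of_nonneg_left
            (dotProduct_transpose_mulVec_self_le_trace_mul hVinv B w) hα.le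
        _ = α * M.trace * q := by ring
  calc q ≤ α * M.trace := hq
    _ ≤ α * (2 * Real.log (det (1 + M))) :=
      mul_le_mul_of_nonneg_left (hM.trace_le_two_mul_log_det_one_add h1M) hα.le
    _ = 2 * α * Real.log (det (1 + M)) := by ring

theorem stmt3_general (d m : ℕ) (X : Finset (Fin d → ℝ)) (hX : X.Nonempty)
    (A : (Fin d → ℝ) → Matrix (Fin d) (Fin m) ℝ)
    (hA : ∀ x ∈ X, ((1 : Matrix (Fin m) (Fin m) ℝ) - (A x)ᵀ * A x).PosSemidef)
    (V : Matrix (Fin d) (Fin d) ℝ)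
    (hVI : (V - (1 : Matrix (Fin d) (Fin d) ℝ)).PosSemidef)
    (θ : Fin d → ℝ) (β : ℝ) (hβ : 0 < β) (α : ℝ) (hα : 0 < α)
    (halign : ∀ v : Fin d → ℝ, ∀ x ∈ X, ∀ y ∈ X, ∃ z ∈ X,
      ((x - y) ⬝ᵥ v) ^ 2 ≤ α * (((A z)ᵀ *ᵥ v) ⬝ᵥ ((A z)ᵀ *ᵥ v)))
    (xs : Fin d → ℝ) (hxs : xs ∈ X) (hgreedy : ∀ y ∈ X, y ⬝ᵥ θ ≤ xs ⬝ᵥ θ) :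
    (X.sup' hX fun y =>
        (y - xs) ⬝ᵥ θ + Real.sqrt β * Real.sqrt ((y - xs) ⬝ᵥ (V⁻¹ *ᵥ (y - xs)))) ^ 2 ≤
      2 * α * β *
        X.sup' hX fun z =>
          Real.log (Matrix.det ((1 : Matrix (Fin m) (Fin m) ℝ) + (A z)ᵀ * V⁻¹ * A z)) := by
  have hVinv : (V⁻¹).PosSemidef := (PosDef.of_posSemidef_sub_one hVI).inv.posSemidef
  obtain ⟨y, hy, hgap⟩ := exists_sq_sup'_le_mul_dotProduct hX hVinv θ hβ.le hxs hgreedy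
  obtain ⟨z, hz, hzalign⟩ := halign (V⁻¹ *ᵥ (y - xs)) y hy xs hxs
  calc _ ≤ β * ((y - xs) ⬝ᵥ (V⁻¹ *ᵥ (y - xs))) := hgap
    _ ≤ β * (2 * α * Real.log (det (1 + (A z)ᵀ * V⁻¹ * A z))) :=
      mul_le_mul_of_nonneg_left
        (dotProduct_inv_mulVec_le_two_mul_log_det hVI (hA z hz) hα hzalign) hβ.le
    _ = 2 * α * β * Real.log (det (1 + (A z)ᵀ * V⁻¹ * A z)) := by ring
    _ ≤ _ := mul_le_mul_of_nonneg_left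
      (le_sup' (fun z => Real.log (det (1 + (A z)ᵀ * V⁻¹ * A z))) hz) (by positivity)

/-- **Lemma 3 of the paper.** In a globally observable game with worst-case
alignment constant `α`, the greedy action `xs` satisfies
`Δ(xs)² ≤ 2 α β max_{z ∈ X} I(z)`, where
`Δ(x) = max_{y ∈ X} (⟨y - x, θ̂⟩ + √β ‖y - x‖_{V⁻¹})` and
`I(z) = log det (I_m + A_zᵀ V⁻¹ A_z)`. -/
theorem stmt3 (d m : ℕ) (X : Finset (Fin d → ℝ)) (hX : X.Nonempty)
    (A : (Fin d → ℝ) → Matrix (Fin d) (Fin m) ℝ)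
    (hA : ∀ x ∈ X, ((1 : Matrix (Fin m) (Fin m) ℝ) - (A x)ᵀ * A x).PosSemidef)
    (V : Matrix (Fin d) (Fin d) ℝ) (hVsymm : V.IsHermitian)
    (hVI : (V - (1 : Matrix (Fin d) (Fin d) ℝ)).PosSemidef)
    (θ : Fin d → ℝ) (β : ℝ) (hβ : 0 < β) (α : ℝ) (hα : 0 < α)
    (halign : ∀ v : Fin d → ℝ, ∀ x ∈ X, ∀ y ∈ X, ∃ z ∈ X,
      ((x - y) ⬝ᵥ v) ^ 2 ≤ α * (((A z)ᵀ *ᵥ v) ⬝ᵥ ((A z)ᵀ *ᵥ v)))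
    (xs : Fin d → ℝ) (hxs : xs ∈ X) (hgreedy : ∀ y ∈ X, y ⬝ᵥ θ ≤ xs ⬝ᵥ θ) :
    (X.sup' hX fun y =>
        (y - xs) ⬝ᵥ θ + Real.sqrt β * Real.sqrt ((y - xs) ⬝ᵥ (V⁻¹ *ᵥ (y - xs)))) ^ 2 ≤
      2 * α * β *
        X.sup' hX fun z =>
          Real.log (Matrix.det ((1 : Matrix (Fin m) (Fin m) ℝ) + (A z)ᵀ * V⁻¹ * A z)) :=
  stmt3_general d m X hX A hA V hVI θ β hβ α hα halign xs hxs hgreedy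
end

section
/- Suppose X ⊂ ℝ^d is a finite nonempty action set, each x ∈ X has an observation matrix A_x ∈ ℝ^{d×m} with ‖A_x‖₂ ≤ 1, V ∈ ℝ^{d×d} is symmetric positive definite with V ⪰ I_d, θ̂ ∈ ℝ^d, β > 0, and α > 0 is such that for every v ∈ ℝ^d and every x, y ∈ X there exists z ∈ X with ⟨x−y, v⟩² ≤ α·‖A_zᵀ v‖². Define the truncated gap Δ̄(x) = min{1, max_{y∈X} (⟨y−x, θ̂⟩ + √β·‖y−x‖_{V^{-1}})} and the information gain I(x) = log det(I_m + A_xᵀ V^{-1} A_x), extended to probability distributions μ on X by Δ̄(μ) = Σ_{x∈X} μ(x)·Δ̄(x) and I(μ) = Σ_{x∈X} μ(x)·I(x). If μ is a probability distribution on X that minimizes the information ratio, in the sense that Δ̄(μ)²·I(ν) ≤ Δ̄(ν)²·I(μ) for every probability distribution ν on X, then Δ̄(μ)³ ≤ 16·α·β·I(μ). -/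
/-!
Let `x₁` be a greedy action, maximising `⟨x, θ̂⟩`. Then `Δ̄(x₁)² ≤ β ‖y - x₁‖²_{V⁻¹}` for some
`y ∈ X`, and global observability (applied with `v = V⁻¹ (y - x₁)`) together with
`log det (1 + N) ≥ log (1 + tr N)` yields an action `z` with `‖y - x₁‖²_{V⁻¹} ≤ 2 α I(z)`.
Minimality of the information ratio of `μ` is only tested against the mixtures
`(1 - q) δ_{x₁} + q μ`, which give `Δ̄(μ) ≤ 2 Δ̄(x₁)` by letting `q → 1`, and
`(1 - Δ̄(x₁)) δ_{x₁} + Δ̄(x₁) δ_z`, which gives `Δ̄(μ)² Δ̄(x₁) I(z) ≤ 4 Δ̄(x₁)² I(μ)`.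
Combining, `Δ̄(μ)³ ≤ 2 Δ̄(x₁) Δ̄(μ)² ≤ 16 α β I(μ)`.
-/

open Matrix Finset

/-- The truncated gap estimate `Δ̄(x) = min {1, max_{y ∈ X} (⟨y - x, θ̂⟩ + √β ‖y - x‖_{V⁻¹})}`. -/
noncomputable def truncGap (d : ℕ) (X : Finset (Fin d → ℝ)) (hX : X.Nonempty)
    (V : Matrix (Fin d) (Fin d) ℝ) (θ : Fin d → ℝ) (β : ℝ) (x : Fin d → ℝ) : ℝ :=
  min 1 (X.sup' hX fun y =>
    (y - x) ⬝ᵥ θ + Real.sqrt β * Real.sqrt ((y - x) ⬝ᵥ (V⁻¹ *ᵥ (y - x))))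

/-- The information gain `I(x) = log det (I_m + A_xᵀ V⁻¹ A_x)`. -/
noncomputable def infoGain (d m : ℕ) (A : (Fin d → ℝ) → Matrix (Fin d) (Fin m) ℝ)
    (V : Matrix (Fin d) (Fin d) ℝ) (x : Fin d → ℝ) : ℝ :=
  Real.log (Matrix.det ((1 : Matrix (Fin m) (Fin m) ℝ) + (A x)ᵀ * V⁻¹ * A x))

theorem Finset.one_add_sum_le_prod_one_add {ι : Type*} (s : Finset ι) {f : ι → ℝ}
    (hf : ∀ i ∈ s, 0 ≤ f i) : 1 + ∑ i ∈ s, f i ≤ ∏ i ∈ s, (1 + f i) := by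
  classical
  induction s using Finset.induction_on with
  | empty => simp
  | insert a s ha ih =>
    rw [sum_insert ha, prod_insert ha]
    nlinarith [ih fun i hi => hf i (mem_insert_of_mem hi), hf a (mem_insert_self a s),
      sum_nonneg fun i hi => hf i (mem_insert_of_mem hi)]

theorem Real.half_le_log_one_add_s4 {c : ℝ} (hc0 : 0 ≤ c) (hc2 : c ≤ 2) :
    c / 2 ≤ Real.log (1 + c) :=
  calc c / 2 ≤ 2 * c / (c + 2) := by rw [le_div_iff₀ (by linarith)]; nlinarith
    _ ≤ Real.log (1 + c) := Real.le_log_one_add_of_nonneg hc0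

theorem le_two_mul_of_forall_mul_sq_le {D a : ℝ} (ha : 0 ≤ a)
    (H : ∀ q : ℝ, 0 ≤ q → q ≤ 1 → q * D ^ 2 ≤ ((1 - q) * a + q * D) ^ 2) : D ≤ 2 * a := by
  by_contra! hD
  have hDa : 0 < D - a := by linarith
  have hden : 0 < 2 * (D - a) ^ 2 := by positivity
  have hnum : 0 < D * (D - 2 * a) := by nlinarith
  -- at `q = 1 - ε` the hypothesis reads `D (D - 2a) ≤ ε (D - a)²`; this `ε` violates it
  set ε := D * (D - 2 * a) / (2 * (D - a) ^ 2)
  have hε0 : 0 < ε := div_pos hnum hden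
  have hε1 : ε ≤ 1 := by rw [div_le_one hden]; nlinarith
  have hε : ε * (2 * (D - a) ^ 2) = D * (D - 2 * a) := div_mul_cancel₀ _ hden.ne'
  nlinarith [H (1 - ε) (by linarith) (by linarith), mul_pos hε0 hnum]

theorem Matrix.PosDef.of_posSemidef_sub_one_s4 {n : Type*} [DecidableEq n] {V : Matrix n n ℝ}
    (hV : (V - 1).PosSemidef) : V.PosDef := by
  simpa using PosDef.posSemidef_add hV PosDef.one

namespace Matrix

variable {n p : Type*} [Fintype n] [Fintype p]

theorem dotProduct_self_nonneg (v : n → ℝ) : 0 ≤ v ⬝ᵥ v :=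
  Fintype.sum_nonneg fun i => mul_self_nonneg (v i)

theorem PosSemidef.dotProduct_mulVec_sq_le_s4 {M : Matrix n n ℝ} (hM : M.PosSemidef)
    (x y : n → ℝ) : (x ⬝ᵥ M *ᵥ y) ^ 2 ≤ (x ⬝ᵥ M *ᵥ x) * (y ⬝ᵥ M *ᵥ y) := by
  classical
  have h := LinearMap.BilinForm.apply_mul_apply_le_of_forall_zero_le (toLinearMap₂' ℝ M)
    (fun v => by simpa [toLinearMap₂'_apply'] using hM.dotProduct_mulVec_nonneg v) x y
  have hT : Mᵀ = M := by simpa using hM.1.eq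
  have hsymm : y ⬝ᵥ M *ᵥ x = x ⬝ᵥ M *ᵥ y := by
    rw [dotProduct_mulVec, ← mulVec_transpose, hT, dotProduct_comm]
  simpa only [toLinearMap₂'_apply', hsymm, ← sq] using h

theorem PosSemidef.transpose_mul_mul_same {M : Matrix n n ℝ} (hM : M.PosSemidef)
    (B : Matrix n p ℝ) : (Bᵀ * M * B).PosSemidef := by
  simpa using hM.conjTranspose_mul_mul_same B

theorem dotProduct_self_le_dotProduct_mulVec [DecidableEq n] {V : Matrix n n ℝ}
    (hV : (V - 1).PosSemidef) (u : n → ℝ) : u ⬝ᵥ u ≤ u ⬝ᵥ V *ᵥ u := by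
  have h := hV.dotProduct_mulVec_nonneg u
  simp only [star_trivial, sub_mulVec, one_mulVec, dotProduct_sub] at h
  linarith

theorem transpose_mulVec_dotProduct_self_le [DecidableEq p] {B : Matrix n p ℝ}
    (hB : (1 - Bᵀ * B).PosSemidef) (u : n → ℝ) :
    (Bᵀ *ᵥ u) ⬝ᵥ (Bᵀ *ᵥ u) ≤ u ⬝ᵥ u := by
  classical
  have hcontr : ∀ v, (B *ᵥ v) ⬝ᵥ (B *ᵥ v) ≤ v ⬝ᵥ v := fun v => by
    have h := hB.dotProduct_mulVec_nonneg v
    simp only [star_trivial, sub_mulVec, one_mulVec, dotProduct_sub, ← mulVec_mulVec,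
      dotProduct_mulVec v, vecMul_transpose] at h
    linarith
  -- `‖Bᵀu‖² = ⟨B Bᵀu, u⟩ ≤ ‖B Bᵀu‖ ‖u‖ ≤ ‖Bᵀu‖ ‖u‖`
  have hCS := PosSemidef.one.dotProduct_mulVec_sq_le_s4 (B *ᵥ Bᵀ *ᵥ u) u
  have ht : (B *ᵥ Bᵀ *ᵥ u) ⬝ᵥ u = (Bᵀ *ᵥ u) ⬝ᵥ (Bᵀ *ᵥ u) := by
    rw [dotProduct_comm, dotProduct_mulVec, ← mulVec_transpose]
  simp only [one_mulVec, ht] at hCS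
  have hBt := mul_le_mul_of_nonneg_right (hcontr (Bᵀ *ᵥ u)) (dotProduct_self_nonneg u)
  nlinarith [dotProduct_self_nonneg (Bᵀ *ᵥ u), dotProduct_self_nonneg u]

theorem trace_transpose_mul_mul (B : Matrix n p ℝ) (M : Matrix n n ℝ) :
    (Bᵀ * M * B).trace = ∑ j, Bᵀ j ⬝ᵥ M *ᵥ Bᵀ j := by
  refine sum_congr rfl fun j _ => ?_
  rw [diag_apply, mul_apply', mul_apply_eq_vecMul, dotProduct_mulVec]
  rfl

theorem PosSemidef.transpose_mulVec_dotProduct_self_le {M : Matrix n n ℝ} (hM : M.PosSemidef)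
    (B : Matrix n p ℝ) (w : n → ℝ) :
    (Bᵀ *ᵥ M *ᵥ w) ⬝ᵥ (Bᵀ *ᵥ M *ᵥ w) ≤ (Bᵀ * M * B).trace * (w ⬝ᵥ M *ᵥ w) :=
  calc (Bᵀ *ᵥ M *ᵥ w) ⬝ᵥ (Bᵀ *ᵥ M *ᵥ w) = ∑ j, (Bᵀ j ⬝ᵥ M *ᵥ w) ^ 2 := by
        simp only [dotProduct, sq]; rfl
    _ ≤ ∑ j, (Bᵀ j ⬝ᵥ M *ᵥ Bᵀ j) * (w ⬝ᵥ M *ᵥ w) :=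
        sum_le_sum fun j _ => hM.dotProduct_mulVec_sq_le_s4 _ _
    _ = (Bᵀ * M * B).trace * (w ⬝ᵥ M *ᵥ w) := by rw [trace_transpose_mul_mul, sum_mul]

theorem PosSemidef.one_add_trace_le_det_one_add [DecidableEq n] {N : Matrix n n ℝ}
    (hN : N.PosSemidef) : 1 + N.trace ≤ (1 + N).det := by
  have hconj : 1 + N = Unitary.conjStarAlgAut ℝ _ hN.1.eigenvectorUnitary
      (diagonal (1 + hN.1.eigenvalues)) := by
    have : diagonal (1 + hN.1.eigenvalues) = 1 + diagonal (RCLike.ofReal ∘ hN.1.eigenvalues) := by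
      ext i j; by_cases h : i = j <;> simp [h]
    rw [this, map_add, map_one, ← hN.1.spectral_theorem]
  rw [hN.1.trace_eq_sum_eigenvalues, hconj, Unitary.conjStarAlgAut_apply, det_mul_comm,
    ← mul_assoc, Unitary.coe_star_mul_self, one_mul, det_diagonal]
  simpa using one_add_sum_le_prod_one_add univ fun i _ => hN.eigenvalues_nonneg i

theorem PosSemidef.log_det_one_add_nonneg [DecidableEq n] {N : Matrix n n ℝ}
    (hN : N.PosSemidef) : 0 ≤ Real.log (1 + N).det :=
  Real.log_nonneg <| (le_add_of_nonneg_right hN.trace_nonneg).trans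
    hN.one_add_trace_le_det_one_add

theorem PosSemidef.half_le_log_det_one_add [DecidableEq n] {N : Matrix n n ℝ}
    (hN : N.PosSemidef) {c : ℝ} (hc0 : 0 ≤ c) (hc2 : c ≤ 2) (hc : c ≤ N.trace) :
    c / 2 ≤ Real.log (1 + N).det :=
  (Real.half_le_log_one_add_s4 hc0 hc2).trans <|
    Real.log_le_log (by linarith) ((by linarith : 1 + c ≤ 1 + N.trace).trans
      hN.one_add_trace_le_det_one_add)

theorem dotProduct_inv_mulVec_le_two_mul_log_det [DecidableEq n] [DecidableEq p]
    {B : Matrix n p ℝ} {V : Matrix n n ℝ} (hB : (1 - Bᵀ * B).PosSemidef)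
    (hV : (V - 1).PosSemidef) {α : ℝ} (hα : 0 ≤ α) {w : n → ℝ}
    (halign : (w ⬝ᵥ V⁻¹ *ᵥ w) ^ 2 ≤ α * ((Bᵀ *ᵥ V⁻¹ *ᵥ w) ⬝ᵥ (Bᵀ *ᵥ V⁻¹ *ᵥ w))) :
    w ⬝ᵥ V⁻¹ *ᵥ w ≤ 2 * α * Real.log (1 + Bᵀ * V⁻¹ * B).det := by
  have hVpd := PosDef.of_posSemidef_sub_one_s4 hV
  have hVinv := hVpd.inv.posSemidef
  have hN := hVinv.transpose_mul_mul_same B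
  set s := w ⬝ᵥ V⁻¹ *ᵥ w
  set t := (Bᵀ *ᵥ V⁻¹ *ᵥ w) ⬝ᵥ (Bᵀ *ᵥ V⁻¹ *ᵥ w)
  have hs0 : 0 ≤ s := by simpa using hVinv.dotProduct_mulVec_nonneg w
  have hts : t ≤ s :=
    calc t ≤ (V⁻¹ *ᵥ w) ⬝ᵥ (V⁻¹ *ᵥ w) := transpose_mulVec_dotProduct_self_le hB _
      _ ≤ (V⁻¹ *ᵥ w) ⬝ᵥ V *ᵥ V⁻¹ *ᵥ w := dotProduct_self_le_dotProduct_mulVec hV _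
      _ = s := by
        rw [mulVec_mulVec, mul_nonsing_inv _ (isUnit_iff_isUnit_det V |>.mp hVpd.isUnit),
          one_mulVec, dotProduct_comm]
  rcases hs0.eq_or_lt with hs | hs
  · rw [← hs]
    exact mul_nonneg (by positivity) hN.log_det_one_add_nonneg
  have hI := hN.half_le_log_det_one_add (div_nonneg (dotProduct_self_nonneg _) hs0)
    (((div_le_one hs).2 hts).trans one_le_two)
    ((div_le_iff₀ hs).2 (hVinv.transpose_mulVec_dotProduct_self_le B w))
  have ht : t ≤ 2 * Real.log (1 + Bᵀ * V⁻¹ * B).det * s := by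
    rw [div_div, div_le_iff₀ (by positivity)] at hI
    linarith
  nlinarith [mul_le_mul_of_nonneg_left ht hα]

end Matrix

section RatioMinimizer

variable {ι : Type*} {X : Finset ι} {Δ I μ ν : ι → ℝ}

def IsRatioMinimizer (X : Finset ι) (Δ I μ : ι → ℝ) : Prop :=
  ∀ ν : ι → ℝ, (∀ x ∈ X, 0 ≤ ν x) → ∑ x ∈ X, ν x = 1 →
    (∑ x ∈ X, μ x * Δ x) ^ 2 * (∑ x ∈ X, ν x * I x) ≤
      (∑ x ∈ X, ν x * Δ x) ^ 2 * (∑ x ∈ X, μ x * I x)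

variable [DecidableEq ι]

theorem sum_ite_eq_mul {a : ι} (ha : a ∈ X) (f : ι → ℝ) :
    ∑ x ∈ X, (if x = a then 1 else 0) * f x = f a := by
  simp [ite_mul, ha]

theorem sum_mix_mul {a : ι} (ha : a ∈ X) (q : ℝ) (f : ι → ℝ) :
    ∑ x ∈ X, ((1 - q) * (if x = a then 1 else 0) + q * ν x) * f x =
      (1 - q) * f a + q * ∑ x ∈ X, ν x * f x := by
  simp only [add_mul, sum_add_distrib, mul_assoc, ← mul_sum, sum_ite_eq_mul ha]

theorem IsRatioMinimizer.mix (h : IsRatioMinimizer X Δ I μ) {a : ι} (ha : a ∈ X)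
    (hν0 : ∀ x ∈ X, 0 ≤ ν x) (hν1 : ∑ x ∈ X, ν x = 1) {q : ℝ} (hq0 : 0 ≤ q) (hq1 : q ≤ 1) :
    (∑ x ∈ X, μ x * Δ x) ^ 2 * ((1 - q) * I a + q * ∑ x ∈ X, ν x * I x) ≤
      ((1 - q) * Δ a + q * ∑ x ∈ X, ν x * Δ x) ^ 2 * ∑ x ∈ X, μ x * I x := by
  have hmix0 : ∀ x ∈ X, 0 ≤ (1 - q) * (if x = a then 1 else 0) + q * ν x := fun x hx =>
    add_nonneg (mul_nonneg (sub_nonneg.2 hq1) (by split_ifs <;> norm_num))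
      (mul_nonneg hq0 (hν0 x hx))
  have hmix1 : ∑ x ∈ X, ((1 - q) * (if x = a then 1 else 0) + q * ν x) = 1 := by
    simpa [hν1] using sum_mix_mul (ν := ν) ha q 1
  simpa only [sum_mix_mul ha] using h _ hmix0 hmix1

theorem IsRatioMinimizer.sum_le_two_mul (h : IsRatioMinimizer X Δ I μ)
    (hμ0 : ∀ x ∈ X, 0 ≤ μ x) (hμ1 : ∑ x ∈ X, μ x = 1) {a : ι} (ha : a ∈ X) (hΔa : 0 ≤ Δ a)
    (hIa : 0 ≤ I a) (hK : 0 < ∑ x ∈ X, μ x * I x) :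
    ∑ x ∈ X, μ x * Δ x ≤ 2 * Δ a := by
  refine le_two_mul_of_forall_mul_sq_le hΔa fun q hq0 hq1 => le_of_mul_le_mul_right ?_ hK
  have := h.mix ha hμ0 hμ1 hq0 hq1
  nlinarith [mul_nonneg (mul_nonneg (sq_nonneg (∑ x ∈ X, μ x * Δ x)) (sub_nonneg.2 hq1)) hIa]

theorem IsRatioMinimizer.sq_mul_mul_le (h : IsRatioMinimizer X Δ I μ)
    (hΔ0 : ∀ x ∈ X, 0 ≤ Δ x) (hΔ1 : ∀ x ∈ X, Δ x ≤ 1) {a z : ι} (ha : a ∈ X) (hz : z ∈ X)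
    (hIa : 0 ≤ I a) (hK : 0 ≤ ∑ x ∈ X, μ x * I x) :
    (∑ x ∈ X, μ x * Δ x) ^ 2 * Δ a * I z ≤ 4 * Δ a ^ 2 * ∑ x ∈ X, μ x * I x := by
  have hmix := h.mix ha (ν := fun x => if x = z then 1 else 0)
    (fun x _ => by split_ifs <;> norm_num) (by simp [hz]) (hΔ0 a ha) (hΔ1 a ha)
  simp only [sum_ite_eq_mul hz] at hmix
  have hΔa0 := hΔ0 a ha
  have hΔa1 := hΔ1 a ha
  have hgap : (1 - Δ a) * Δ a + Δ a * Δ z ≤ 2 * Δ a := by nlinarith [hΔ1 z hz]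
  have hgap0 : 0 ≤ (1 - Δ a) * Δ a + Δ a * Δ z := by nlinarith [hΔ0 z hz]
  calc (∑ x ∈ X, μ x * Δ x) ^ 2 * Δ a * I z
      ≤ (∑ x ∈ X, μ x * Δ x) ^ 2 * ((1 - Δ a) * I a + Δ a * I z) := by
        nlinarith [mul_nonneg (mul_nonneg (sq_nonneg (∑ x ∈ X, μ x * Δ x)) (sub_nonneg.2 hΔa1)) hIa]
    _ ≤ ((1 - Δ a) * Δ a + Δ a * Δ z) ^ 2 * ∑ x ∈ X, μ x * I x := hmix
    _ ≤ (2 * Δ a) ^ 2 * ∑ x ∈ X, μ x * I x := by gcongr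
    _ = 4 * Δ a ^ 2 * ∑ x ∈ X, μ x * I x := by ring

theorem IsRatioMinimizer.cube_le (h : IsRatioMinimizer X Δ I μ)
    (hμ0 : ∀ x ∈ X, 0 ≤ μ x) (hμ1 : ∑ x ∈ X, μ x = 1) (hΔ0 : ∀ x ∈ X, 0 ≤ Δ x)
    (hΔ1 : ∀ x ∈ X, Δ x ≤ 1) (hI0 : ∀ x ∈ X, 0 ≤ I x)
    (hΔI : (∀ x ∈ X, I x = 0) → ∀ x ∈ X, Δ x = 0) {c : ℝ} (hc : 0 ≤ c) {a z : ι}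
    (ha : a ∈ X) (hz : z ∈ X) (haz : Δ a ^ 2 ≤ c * I z) :
    (∑ x ∈ X, μ x * Δ x) ^ 3 ≤ 8 * c * ∑ x ∈ X, μ x * I x := by
  have hD0 : 0 ≤ ∑ x ∈ X, μ x * Δ x := sum_nonneg fun x hx => mul_nonneg (hμ0 x hx) (hΔ0 x hx)
  have hK0 : 0 ≤ ∑ x ∈ X, μ x * I x := sum_nonneg fun x hx => mul_nonneg (hμ0 x hx) (hI0 x hx)
  rcases hK0.eq_or_lt with hK | hK
  · suffices ∑ x ∈ X, μ x * Δ x = 0 by rw [this, ← hK]; simp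
    by_contra hD
    have hI : ∀ x ∈ X, I x = 0 := fun x hx => by
      have := h.mix hx hμ0 hμ1 le_rfl zero_le_one
      rw [← hK] at this
      simp only [sub_zero, one_mul, zero_mul, add_zero, mul_zero] at this
      exact le_antisymm (nonpos_of_mul_nonpos_right this (by positivity)) (hI0 x hx)
    exact hD (sum_eq_zero fun x hx => by rw [hΔI hI x hx, mul_zero])
  have hDa := h.sum_le_two_mul hμ0 hμ1 ha (hΔ0 a ha) (hI0 a ha) hK
  have hmain := h.sq_mul_mul_le hΔ0 hΔ1 ha hz (hI0 a ha) hK.le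
  set D := ∑ x ∈ X, μ x * Δ x
  set K := ∑ x ∈ X, μ x * I x
  rcases (hΔ0 a ha).eq_or_lt with hΔa | hΔa
  · have : D = 0 := by rw [← hΔa] at hDa; linarith
    rw [this, zero_pow three_ne_zero]; positivity
  have h4 : D ^ 2 * Δ a ≤ 4 * c * K := by
    refine le_of_mul_le_mul_right ?_ (pow_pos hΔa 2)
    nlinarith [mul_le_mul_of_nonneg_left haz (mul_nonneg (sq_nonneg D) hΔa.le),
      mul_le_mul_of_nonneg_left hmain hc]
  nlinarith [mul_le_mul_of_nonneg_right hDa (sq_nonneg D)]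

end RatioMinimizer

section TruncGap

variable {d : ℕ} {X : Finset (Fin d → ℝ)} (hX : X.Nonempty) {V : Matrix (Fin d) (Fin d) ℝ}
  {θ : Fin d → ℝ} {β : ℝ} {x : Fin d → ℝ}

theorem truncGap_nonneg (hx : x ∈ X) : 0 ≤ truncGap d X hX V θ β x :=
  le_min zero_le_one (le_sup'_of_le _ hx (by simp))

theorem truncGap_le_one : truncGap d X hX V θ β x ≤ 1 := min_le_left _ _

theorem truncGap_eq_zero (hV : V⁻¹.PosDef) (hx : x ∈ X)
    (h : ∀ y ∈ X, (y - x) ⬝ᵥ V⁻¹ *ᵥ (y - x) ≤ 0) : truncGap d X hX V θ β x = 0 := by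
  refine le_antisymm ((min_le_right _ _).trans (sup'_le _ _ fun y hy => ?_))
    (truncGap_nonneg hX hx)
  have hxy : y - x = 0 := by
    by_contra hne
    have := hV.dotProduct_mulVec_pos hne
    simp only [star_trivial] at this
    linarith [h y hy]
  simp [hxy]

theorem exists_truncGap_sq_le (hβ : 0 ≤ β) (hV : V⁻¹.PosSemidef) (hx : x ∈ X)
    (hmax : ∀ y ∈ X, y ⬝ᵥ θ ≤ x ⬝ᵥ θ) :
    ∃ y ∈ X, truncGap d X hX V θ β x ^ 2 ≤ β * ((y - x) ⬝ᵥ V⁻¹ *ᵥ (y - x)) := by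
  obtain ⟨y, hy, hsup⟩ := exists_mem_eq_sup' hX fun y =>
    (y - x) ⬝ᵥ θ + Real.sqrt β * Real.sqrt ((y - x) ⬝ᵥ (V⁻¹ *ᵥ (y - x)))
  refine ⟨y, hy, ?_⟩
  have hle : truncGap d X hX V θ β x ≤
      Real.sqrt β * Real.sqrt ((y - x) ⬝ᵥ V⁻¹ *ᵥ (y - x)) := by
    have : truncGap d X hX V θ β x ≤ (y - x) ⬝ᵥ θ +
        Real.sqrt β * Real.sqrt ((y - x) ⬝ᵥ V⁻¹ *ᵥ (y - x)) := hsup ▸ min_le_right _ _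
    rw [sub_dotProduct] at this
    linarith [hmax y hy]
  calc truncGap d X hX V θ β x ^ 2
      ≤ (Real.sqrt β * Real.sqrt ((y - x) ⬝ᵥ V⁻¹ *ᵥ (y - x))) ^ 2 :=
        pow_le_pow_left₀ (truncGap_nonneg hX hx) hle 2
    _ = β * ((y - x) ⬝ᵥ V⁻¹ *ᵥ (y - x)) := by
        rw [mul_pow, Real.sq_sqrt hβ,
          Real.sq_sqrt (by simpa using hV.dotProduct_mulVec_nonneg (y - x))]

end TruncGap

theorem infoGain_nonneg {d m : ℕ} {A : (Fin d → ℝ) → Matrix (Fin d) (Fin m) ℝ}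
    {V : Matrix (Fin d) (Fin d) ℝ} (hV : V⁻¹.PosSemidef) (x : Fin d → ℝ) :
    0 ≤ infoGain d m A V x :=
  (hV.transpose_mul_mul_same (A x)).log_det_one_add_nonneg

theorem stmt4_general (d m : ℕ) (X : Finset (Fin d → ℝ)) (hX : X.Nonempty)
    (A : (Fin d → ℝ) → Matrix (Fin d) (Fin m) ℝ)
    (hA : ∀ x ∈ X, ((1 : Matrix (Fin m) (Fin m) ℝ) - (A x)ᵀ * A x).PosSemidef)
    (V : Matrix (Fin d) (Fin d) ℝ)
    (hVI : (V - (1 : Matrix (Fin d) (Fin d) ℝ)).PosSemidef)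
    (θ : Fin d → ℝ) (β : ℝ) (hβ : 0 < β) (α : ℝ) (hα : 0 < α)
    (halign : ∀ v : Fin d → ℝ, ∀ x ∈ X, ∀ y ∈ X, ∃ z ∈ X,
      ((x - y) ⬝ᵥ v) ^ 2 ≤ α * (((A z)ᵀ *ᵥ v) ⬝ᵥ ((A z)ᵀ *ᵥ v)))
    (μ : (Fin d → ℝ) → ℝ) (hμ0 : ∀ x ∈ X, 0 ≤ μ x) (hμ1 : ∑ x ∈ X, μ x = 1)
    (hmin : ∀ ν : (Fin d → ℝ) → ℝ, (∀ x ∈ X, 0 ≤ ν x) → (∑ x ∈ X, ν x = 1) →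
      (∑ x ∈ X, μ x * truncGap d X hX V θ β x) ^ 2 * (∑ x ∈ X, ν x * infoGain d m A V x) ≤
      (∑ x ∈ X, ν x * truncGap d X hX V θ β x) ^ 2 * (∑ x ∈ X, μ x * infoGain d m A V x)) :
    (∑ x ∈ X, μ x * truncGap d X hX V θ β x) ^ 3 ≤
      16 * α * β * ∑ x ∈ X, μ x * infoGain d m A V x := by
  classical
  have hVinv := (PosDef.of_posSemidef_sub_one_s4 hVI).inv
  have hobs : ∀ x ∈ X, ∀ y ∈ X, ∃ z ∈ X,
      (y - x) ⬝ᵥ V⁻¹ *ᵥ (y - x) ≤ 2 * α * infoGain d m A V z := fun x hx y hy => by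
    obtain ⟨z, hz, hyx⟩ := halign (V⁻¹ *ᵥ (y - x)) y hy x hx
    exact ⟨z, hz, dotProduct_inv_mulVec_le_two_mul_log_det (hA z hz) hVI hα.le hyx⟩
  -- if `I` vanishes on `X`, then `X` is a single point
  have hdeg : (∀ z ∈ X, infoGain d m A V z = 0) → ∀ x ∈ X, truncGap d X hX V θ β x = 0 :=
    fun hI x hx => truncGap_eq_zero hX hVinv hx fun y hy => by
      obtain ⟨z, hz, hyx⟩ := hobs x hx y hy
      simpa [hI z hz] using hyx
  obtain ⟨x₁, hx₁, hmax⟩ := X.exists_max_image (· ⬝ᵥ θ) hX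
  obtain ⟨y₁, hy₁, hgap⟩ := exists_truncGap_sq_le hX hβ.le hVinv.posSemidef hx₁ hmax
  obtain ⟨z, hz, hy₁z⟩ := hobs x₁ hx₁ y₁ hy₁
  have hx₁z : truncGap d X hX V θ β x₁ ^ 2 ≤ 2 * α * β * infoGain d m A V z :=
    hgap.trans ((mul_le_mul_of_nonneg_left hy₁z hβ.le).trans_eq (by ring))
  have := IsRatioMinimizer.cube_le hmin hμ0 hμ1 (fun x hx => truncGap_nonneg hX hx)
    (fun _ _ => truncGap_le_one hX) (fun x _ => infoGain_nonneg hVinv.posSemidef x) hdeg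
    (by positivity) hx₁ hz hx₁z
  linarith

/-- In a globally observable game with alignment constant `α`, any
distribution `μ` minimizing the information ratio (with the truncated gap estimate `Δ̄`
and information gain `I`) satisfies `Δ̄(μ)³ ≤ 16 α β I(μ)`. -/
theorem stmt4 (d m : ℕ) (X : Finset (Fin d → ℝ)) (hX : X.Nonempty)
    (A : (Fin d → ℝ) → Matrix (Fin d) (Fin m) ℝ)
    (hA : ∀ x ∈ X, ((1 : Matrix (Fin m) (Fin m) ℝ) - (A x)ᵀ * A x).PosSemidef)
    (V : Matrix (Fin d) (Fin d) ℝ) (hVsymm : V.IsHermitian)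
    (hVI : (V - (1 : Matrix (Fin d) (Fin d) ℝ)).PosSemidef)
    (θ : Fin d → ℝ) (β : ℝ) (hβ : 0 < β) (α : ℝ) (hα : 0 < α)
    (halign : ∀ v : Fin d → ℝ, ∀ x ∈ X, ∀ y ∈ X, ∃ z ∈ X,
      ((x - y) ⬝ᵥ v) ^ 2 ≤ α * (((A z)ᵀ *ᵥ v) ⬝ᵥ ((A z)ᵀ *ᵥ v)))
    (μ : (Fin d → ℝ) → ℝ) (hμ0 : ∀ x ∈ X, 0 ≤ μ x) (hμ1 : ∑ x ∈ X, μ x = 1)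
    (hmin : ∀ ν : (Fin d → ℝ) → ℝ, (∀ x ∈ X, 0 ≤ ν x) → (∑ x ∈ X, ν x = 1) →
      (∑ x ∈ X, μ x * truncGap d X hX V θ β x) ^ 2 * (∑ x ∈ X, ν x * infoGain d m A V x) ≤
      (∑ x ∈ X, ν x * truncGap d X hX V θ β x) ^ 2 * (∑ x ∈ X, μ x * infoGain d m A V x)) :
    (∑ x ∈ X, μ x * truncGap d X hX V θ β x) ^ 3 ≤
      16 * α * β * ∑ x ∈ X, μ x * infoGain d m A V x :=
  stmt4_general d m X hX A hA V hVI θ β hβ α hα halign μ hμ0 hμ1 hmin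
end
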